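/- arXiv:1412.4197 — 3 statements merged into one kernel-verified Lean document; each statement's English description precedes it below -/
import Mathlib

section
/- Fix t > 0 and E ⊆ ℕ₀, and let f = f_{χ_E} : ℕ₀ → ℝ be the Stein solution associated to the indicator function χ_E, i.e. f(0) = 0 and f(k) = ((k−1)!/t^k) Σ_{i=0}^{k−1} (χ_E(i) − ν_t(E)) t^i/i! for k ≥ 1. Then |f(k)| ≤ 1 for every k with 1 ≤ k ≤ t, and |f(k)| ≤ (2+t)/k for every k > t. -/
open Filter Set Topology

/-- `ν_t(E) = Σ_{k ∈ E} e^{-t} t^k / k!`, the Poisson measure of `E ⊆ ℕ₀`. -/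
noncomputable def nuT (t : ℝ) (E : Set ℕ) : ℝ :=
  ∑' k : E, Real.exp (-t) * t ^ (k : ℕ) / (Nat.factorial (k : ℕ))

/-- The Stein solution `f_{χ_E}` associated to the indicator of `E`:
`f(0) = 0` and `f(k) = ((k-1)!/t^k) Σ_{i=0}^{k-1} (χ_E(i) - ν_t(E)) t^i/i!` for `k ≥ 1`. -/
noncomputable def steinInd (t : ℝ) (E : Set ℕ) : ℕ → ℝ
  | 0 => 0
  | k + 1 => (Nat.factorial k : ℝ) / t ^ (k + 1) *
      ∑ i ∈ Finset.range (k + 1),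
        (E.indicator (fun _ => (1 : ℝ)) i - nuT t E) * t ^ i / (Nat.factorial i)


private lemma poisson_summable (t : ℝ) :
    Summable (fun i : ℕ => t ^ i / (Nat.factorial i : ℝ)) :=
  Real.summable_pow_div_factorial t

private lemma tsum_poisson (t : ℝ) :
    ∑' i : ℕ, t ^ i / (Nat.factorial i : ℝ) = Real.exp t := by
  rw [Real.exp_eq_exp_ℝ, NormedSpace.exp_eq_tsum_div]

private lemma nuT_eq (t : ℝ) (E : Set ℕ) :
    nuT t E = Real.exp (-t) * ∑' k : E, t ^ (k : ℕ) / (Nat.factorial (k : ℕ) : ℝ) := by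
  rw [nuT, ← tsum_mul_left]
  congr 1; ext k; ring

private lemma nuT_nonneg {t : ℝ} (ht : 0 < t) (E : Set ℕ) : 0 ≤ nuT t E := by
  apply tsum_nonneg
  intro k
  positivity

private lemma subE_summable {t : ℝ} (ht : 0 < t) (E : Set ℕ) :
    Summable (fun k : ℕ => E.indicator (fun i => t ^ i / (Nat.factorial i : ℝ)) k) :=
  (poisson_summable t).indicator E

private lemma nuT_le_one {t : ℝ} (ht : 0 < t) (E : Set ℕ) : nuT t E ≤ 1 := by
  rw [nuT_eq]
  have h1 : (∑' k : E, t ^ (k : ℕ) / (Nat.factorial (k : ℕ) : ℝ)) ≤ Real.exp t := by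
    rw [tsum_subtype E (fun i => t ^ i / (Nat.factorial i : ℝ)), ← tsum_poisson t]
    apply Summable.tsum_le_tsum _ (subE_summable ht E) (poisson_summable t)
    intro i
    by_cases hi : i ∈ E
    · simp [hi]
    · simp [hi]; positivity
  calc Real.exp (-t) * ∑' k : E, t ^ (k : ℕ) / (Nat.factorial (k : ℕ) : ℝ)
      ≤ Real.exp (-t) * Real.exp t := by
        apply mul_le_mul_of_nonneg_left h1 (Real.exp_nonneg _)
    _ = 1 := by rw [← Real.exp_add]; simp

private lemma g_abs_le {t : ℝ} (ht : 0 < t) (E : Set ℕ) (i : ℕ) :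
    |(E.indicator (fun _ => (1 : ℝ)) i - nuT t E) * t ^ i / (Nat.factorial i : ℝ)|
      ≤ t ^ i / (Nat.factorial i : ℝ) := by
  rw [abs_div, abs_mul]
  have h1 : |E.indicator (fun _ => (1 : ℝ)) i - nuT t E| ≤ 1 := by
    have h2 := nuT_nonneg ht E
    have h3 := nuT_le_one ht E
    by_cases hi : i ∈ E <;> simp [hi, abs_le] <;> constructor <;> linarith
  have h4 : |t ^ i| = t ^ i := abs_of_nonneg (by positivity)
  have h5 : |(Nat.factorial i : ℝ)| = (Nat.factorial i : ℝ) := by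
    simp [abs_of_nonneg]
  rw [h4, h5]
  apply div_le_div_of_nonneg_right _ (by positivity)
  · calc |E.indicator (fun _ => (1 : ℝ)) i - nuT t E| * t ^ i
        ≤ 1 * t ^ i := by apply mul_le_mul_of_nonneg_right h1 (by positivity)
      _ = t ^ i := one_mul _

private lemma g_summable {t : ℝ} (ht : 0 < t) (E : Set ℕ) :
    Summable (fun i : ℕ =>
      (E.indicator (fun _ => (1 : ℝ)) i - nuT t E) * t ^ i / (Nat.factorial i : ℝ)) := by
  apply Summable.of_abs
  apply Summable.of_nonneg_of_le (fun i => abs_nonneg _) (fun i => g_abs_le ht E i)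
    (poisson_summable t)

private lemma g_tsum_zero {t : ℝ} (ht : 0 < t) (E : Set ℕ) :
    ∑' i : ℕ, (E.indicator (fun _ => (1 : ℝ)) i - nuT t E) * t ^ i / (Nat.factorial i : ℝ)
      = 0 := by
  have heq : ∀ i : ℕ,
      (E.indicator (fun _ => (1 : ℝ)) i - nuT t E) * t ^ i / (Nat.factorial i : ℝ)
      = E.indicator (fun j => t ^ j / (Nat.factorial j : ℝ)) i
        - nuT t E * (t ^ i / (Nat.factorial i : ℝ)) := by
    intro i
    by_cases hi : i ∈ E <;> simp [hi] <;> ring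
  rw [tsum_congr heq, Summable.tsum_sub (subE_summable ht E) ((poisson_summable t).mul_left _),
    tsum_mul_left, tsum_poisson, ← tsum_subtype E (fun i => t ^ i / (Nat.factorial i : ℝ))]
  have hexp : Real.exp (-t) * Real.exp t = 1 := by rw [← Real.exp_add]; simp
  have hS : (∑' k : E, t ^ (k : ℕ) / (Nat.factorial (k : ℕ) : ℝ)) = Real.exp t * nuT t E := by
    rw [nuT_eq, ← mul_assoc, mul_comm (Real.exp t) (Real.exp (-t)), hexp, one_mul]
  rw [hS]; ring

private lemma pow_div_fact_mono {t : ℝ} (ht : 0 < t) :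
    ∀ m : ℕ, (m : ℝ) ≤ t → ∀ i ≤ m,
      t ^ i / (Nat.factorial i : ℝ) ≤ t ^ m / (Nat.factorial m : ℝ) := by
  intro m
  induction m with
  | zero => intro _ i hi; interval_cases i; exact le_refl _
  | succ n ih =>
    intro hmt i hi
    rcases Nat.lt_succ_iff_lt_or_eq.mp (Nat.lt_succ_of_le hi) with h | h
    · have h1 : (n : ℝ) ≤ t := by
        have : ((n : ℝ)) ≤ (n : ℝ) + 1 := by linarith
        push_cast at hmt; linarith
      have h2 := ih h1 i (Nat.lt_succ_iff.mp h)
      refine h2.trans ?_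
      rw [div_le_div_iff₀ (by positivity) (by positivity)]
      have hfac : (Nat.factorial (n + 1) : ℝ) = ((n : ℝ) + 1) * (Nat.factorial n : ℝ) := by
        push_cast [Nat.factorial_succ]; ring
      rw [hfac, pow_succ]
      have hn1 : (n : ℝ) + 1 ≤ t := by push_cast at hmt; linarith
      have hfp : (0 : ℝ) < (Nat.factorial n : ℝ) := by positivity
      nlinarith [mul_le_mul_of_nonneg_left hn1 (le_of_lt (mul_pos (pow_pos ht n) hfp))]
    · subst h; exact le_refl _

/-- **Lemma (pointwise bounds on the Stein solution).**
`|f_{χ_E}(k)| ≤ 1` for `1 ≤ k ≤ t` and `|f_{χ_E}(k)| ≤ (2+t)/k` for `k > t`. -/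
theorem steinInd_bounds (t : ℝ) (ht : 0 < t) (E : Set ℕ) :
    (∀ k : ℕ, 1 ≤ k → (k : ℝ) ≤ t → |steinInd t E k| ≤ 1) ∧
    (∀ k : ℕ, t < (k : ℝ) → |steinInd t E k| ≤ (2 + t) / (k : ℝ)) := by
  constructor
  · intro k hk hkt
    obtain ⟨m, rfl⟩ : ∃ m, k = m + 1 := ⟨k - 1, (Nat.succ_pred_eq_of_pos hk).symm⟩
    push_cast at hkt
    have hm : (m : ℝ) ≤ t := by linarith
    rw [steinInd, abs_mul,
      abs_of_nonneg (show (0:ℝ) ≤ (Nat.factorial m : ℝ) / t ^ (m+1) by positivity)]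
    have hSb : |∑ i ∈ Finset.range (m + 1),
        (E.indicator (fun _ => (1 : ℝ)) i - nuT t E) * t ^ i / (Nat.factorial i : ℝ)|
        ≤ ((m : ℝ) + 1) * (t ^ m / (Nat.factorial m : ℝ)) := by
      calc |∑ i ∈ Finset.range (m + 1),
            (E.indicator (fun _ => (1 : ℝ)) i - nuT t E) * t ^ i / (Nat.factorial i : ℝ)|
          ≤ ∑ i ∈ Finset.range (m + 1),
            |(E.indicator (fun _ => (1 : ℝ)) i - nuT t E) * t ^ i / (Nat.factorial i : ℝ)| :=
            Finset.abs_sum_le_sum_abs _ _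
        _ ≤ ∑ i ∈ Finset.range (m + 1), t ^ i / (Nat.factorial i : ℝ) :=
            Finset.sum_le_sum (fun i _ => g_abs_le ht E i)
        _ ≤ ∑ _i ∈ Finset.range (m + 1), t ^ m / (Nat.factorial m : ℝ) :=
            Finset.sum_le_sum (fun i hi =>
              pow_div_fact_mono ht m hm i (Nat.lt_succ_iff.mp (Finset.mem_range.mp hi)))
        _ = ((m : ℝ) + 1) * (t ^ m / (Nat.factorial m : ℝ)) := by
            rw [Finset.sum_const, Finset.card_range]; push_cast; ring
    calc (Nat.factorial m : ℝ) / t ^ (m+1) * |∑ i ∈ Finset.range (m + 1),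
          (E.indicator (fun _ => (1 : ℝ)) i - nuT t E) * t ^ i / (Nat.factorial i : ℝ)|
        ≤ (Nat.factorial m : ℝ) / t ^ (m+1) *
          (((m : ℝ) + 1) * (t ^ m / (Nat.factorial m : ℝ))) :=
          mul_le_mul_of_nonneg_left hSb (by positivity)
      _ = ((m : ℝ) + 1) / t := by
          have hfp : (0:ℝ) < (Nat.factorial m : ℝ) := by positivity
          field_simp
          ring
      _ ≤ 1 := by rw [div_le_one ht]; linarith
  · intro k hk
    obtain ⟨m, rfl⟩ : ∃ m, k = m + 1 := by
      rcases k with _ | m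
      · exfalso; simp at hk; linarith
      · exact ⟨m, rfl⟩
    push_cast at hk ⊢
    have h2 : (0:ℝ) < (m : ℝ) + 2 - t := by linarith
    set g : ℕ → ℝ := fun i =>
      (E.indicator (fun _ => (1 : ℝ)) i - nuT t E) * t ^ i / (Nat.factorial i : ℝ) with hg
    have hpart := Summable.sum_add_tsum_nat_add (f := g) (m + 1) (g_summable ht E)
    have hS : ∑ i ∈ Finset.range (m + 1), g i = - ∑' i, g (i + (m + 1)) := by
      rw [g_tsum_zero ht E] at hpart
      linarith
    set r : ℝ := t / ((m : ℝ) + 2) with hr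
    have hr0 : 0 ≤ r := by positivity
    have hr1 : r < 1 := by rw [hr, div_lt_one (by linarith)]; linarith
    have hshift : Summable fun i => g (i + (m + 1)) :=
      (summable_nat_add_iff (m + 1)).mpr (g_summable ht E)
    have hgeo : Summable fun i : ℕ => t ^ (m+1) / (Nat.factorial (m+1) : ℝ) * r ^ i :=
      (summable_geometric_of_lt_one hr0 hr1).mul_left _
    have key : ∀ i : ℕ, |g (i + (m + 1))|
        ≤ t ^ (m+1) / (Nat.factorial (m+1) : ℝ) * r ^ i := by
      intro i
      refine (g_abs_le ht E (i + (m+1))).trans ?_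
      have hfac : (Nat.factorial (m+1) : ℝ) * ((m : ℝ) + 2) ^ i
          ≤ (Nat.factorial (i + (m+1)) : ℝ) := by
        have h := Nat.factorial_mul_pow_le_factorial (m := m + 1) (n := i)
        have : (m + 1 + i) = i + (m + 1) := by ring
        rw [this] at h
        exact_mod_cast h
      have hR : t ^ (m+1) / (Nat.factorial (m+1) : ℝ) * r ^ i
          = t ^ (i + (m+1)) / ((Nat.factorial (m+1) : ℝ) * ((m : ℝ) + 2) ^ i) := by
        rw [hr, div_pow, pow_add]
        have hfp : (0:ℝ) < (Nat.factorial (m+1) : ℝ) := by positivity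
        field_simp
        ring
      rw [hR]
      gcongr
    have htail : |∑' i, g (i + (m + 1))|
        ≤ t ^ (m+1) / (Nat.factorial (m+1) : ℝ) * (1 - r)⁻¹ := by
      have h1 : |∑' i, g (i + (m + 1))| ≤ ∑' i, |g (i + (m + 1))| := by
        simpa [Real.norm_eq_abs] using norm_tsum_le_tsum_norm (f := fun i => g (i + (m+1)))
          (by simpa [Real.norm_eq_abs] using hshift.abs)
      refine h1.trans ?_
      calc ∑' i, |g (i + (m + 1))|
          ≤ ∑' i : ℕ, t ^ (m+1) / (Nat.factorial (m+1) : ℝ) * r ^ i :=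
            Summable.tsum_le_tsum key hshift.abs hgeo
        _ = t ^ (m+1) / (Nat.factorial (m+1) : ℝ) * (1 - r)⁻¹ := by
            rw [tsum_mul_left, tsum_geometric_of_lt_one hr0 hr1]
    rw [steinInd, abs_mul,
      abs_of_nonneg (show (0:ℝ) ≤ (Nat.factorial m : ℝ) / t ^ (m+1) by positivity)]
    have hSabs : |∑ i ∈ Finset.range (m + 1), g i|
        ≤ t ^ (m+1) / (Nat.factorial (m+1) : ℝ) * (1 - r)⁻¹ := by
      rw [hS, abs_neg]; exact htail
    calc (Nat.factorial m : ℝ) / t ^ (m+1) * |∑ i ∈ Finset.range (m + 1), g i|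
        ≤ (Nat.factorial m : ℝ) / t ^ (m+1) *
          (t ^ (m+1) / (Nat.factorial (m+1) : ℝ) * (1 - r)⁻¹) :=
          mul_le_mul_of_nonneg_left hSabs (by positivity)
      _ = ((m : ℝ) + 2) / (((m : ℝ) + 1) * ((m : ℝ) + 2 - t)) := by
          have hfac : (Nat.factorial (m+1) : ℝ) = ((m : ℝ) + 1) * (Nat.factorial m : ℝ) := by
            push_cast [Nat.factorial_succ]; ring
          have hfp : (0:ℝ) < (Nat.factorial m : ℝ) := by positivity
          rw [hfac, hr]
          have h1r : 1 - t / ((m : ℝ) + 2) = ((m : ℝ) + 2 - t) / ((m : ℝ) + 2) := by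
            field_simp
          rw [h1r]
          field_simp
      _ ≤ (2 + t) / ((m : ℝ) + 1) := by
          rw [div_le_div_iff₀ (by positivity) (by linarith)]
          have hin : (0:ℝ) < (1+t)*((m:ℝ)+2) - t*(2+t) := by
            nlinarith [mul_lt_mul_of_pos_left (show t+1 < (m:ℝ)+2 by linarith)
              (show (0:ℝ) < 1+t by linarith)]
          nlinarith [mul_pos (show (0:ℝ) < (m:ℝ)+1 by positivity) hin]
end

section
/- Fix t > 0 and E ⊆ ℕ₀, and let f = f_{χ_E} : ℕ₀ → ℝ be the Stein solution associated to the indicator function χ_E, i.e. f(0) = 0 and f(k) = ((k−1)!/t^k) Σ_{i=0}^{k−1} (χ_E(i) − ν_t(E)) t^i/i! for k ≥ 1. Then for every m ∈ ℕ: Σ_{k=1}^m |f(k)| ≤ m if m ≤ t, and Σ_{k=1}^m |f(k)| ≤ t + (2+t) log(m/t) if m > t. -/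
open Filter Set Topology

/-!
Write `p i = t ^ i / i !`, let `T, R` be the sums of `p` over `i ≤ k` and `i > k`, and `A, B` the
same sums weighted by `χ_E`. Since `∑ p = e^t`, `f(k+1) = k! e^{-t} (A R - B T) / t^{k+1}`, and
`|A R - B T| ≤ T R` because `0 ≤ A ≤ T` and `0 ≤ B ≤ R`.
For `i ≤ n` one has `p i * p (r + n) ≤ p n * p (r + i)`, which gives `T R ≤ e^t t^{k+1} / k!`,
hence `|f| ≤ 1`. For `k + 1 > t` the tail `R` is dominated by a geometric series, giving
`|f(k+1)| ≤ (2 + t) / (k + 1)`. Summing `1` up to `⌊t⌋₊ + 1` and `(2 + t) / k` beyond, the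
harmonic tail is at most a logarithm.
-/

open scoped Nat

lemma factorial_add_mul_factorial_le {a b : ℕ} (hab : a ≤ b) (r : ℕ) :
    b ! * (r + a)! ≤ a ! * (r + b)! := by
  rw [add_comm r a, add_comm r b, ← Nat.factorial_mul_ascFactorial a r,
    ← Nat.factorial_mul_ascFactorial b r, mul_left_comm]
  gcongr

lemma hasSum_pow_div_factorial (t : ℝ) : HasSum (fun i ↦ t ^ i / i !) (Real.exp t) :=
  Real.exp_eq_exp_ℝ ▸ NormedSpace.expSeries_div_hasSum_exp t

lemma tsum_pow_div_factorial_add_le {t : ℝ} (ht : 0 ≤ t) (n : ℕ) :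
    ∑' r, t ^ (r + n) / (r + n)! ≤ Real.exp t := by
  rw [← (hasSum_pow_div_factorial t).tsum_eq,
    ← (Real.summable_pow_div_factorial t).sum_add_tsum_nat_add n]
  exact le_add_of_nonneg_left (Finset.sum_nonneg fun i _ ↦ by positivity)

/-- The Poisson weights `t ^ i / i !` are log-supermodular along shifts. -/
lemma pow_div_factorial_mul_le {t : ℝ} (ht : 0 ≤ t) {a b : ℕ} (hab : a ≤ b) (r : ℕ) :
    t ^ a / a ! * (t ^ (r + b) / (r + b)!) ≤ t ^ b / b ! * (t ^ (r + a) / (r + a)!) := by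
  rw [div_mul_div_comm, div_mul_div_comm, ← pow_add, ← pow_add,
    show a + (r + b) = b + (r + a) by omega]
  refine div_le_div_of_nonneg_left (by positivity) (by positivity) ?_
  exact_mod_cast factorial_add_mul_factorial_le hab r

lemma sum_range_mul_tsum_add_le {t : ℝ} (ht : 0 ≤ t) (n : ℕ) :
    (∑ i ∈ Finset.range n, t ^ i / i !) * ∑' r, t ^ (r + n) / (r + n)!
      ≤ n * (t ^ n / n !) * Real.exp t := by
  have hsumm (i : ℕ) : Summable fun r ↦ t ^ (r + i) / (r + i)! :=
    (summable_nat_add_iff i).2 (Real.summable_pow_div_factorial t)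
  calc (∑ i ∈ Finset.range n, t ^ i / i !) * ∑' r, t ^ (r + n) / (r + n)!
      = ∑ i ∈ Finset.range n, ∑' r, t ^ i / i ! * (t ^ (r + n) / (r + n)!) := by
        simp_rw [Finset.sum_mul, tsum_mul_left]
    _ ≤ ∑ i ∈ Finset.range n, ∑' r, t ^ n / n ! * (t ^ (r + i) / (r + i)!) := by
        refine Finset.sum_le_sum fun i hi ↦ ?_
        exact Summable.tsum_le_tsum
          (fun r ↦ pow_div_factorial_mul_le ht (Finset.mem_range.1 hi).le r)
          ((hsumm n).mul_left _) ((hsumm i).mul_left _)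
    _ ≤ ∑ i ∈ Finset.range n, t ^ n / n ! * Real.exp t := by
        gcongr with i
        rw [tsum_mul_left]
        gcongr
        exact tsum_pow_div_factorial_add_le ht i
    _ = n * (t ^ n / n !) * Real.exp t := by
        rw [Finset.sum_const, Finset.card_range, nsmul_eq_mul, mul_assoc]

lemma tsum_pow_div_factorial_add_le_geometric {t : ℝ} (ht : 0 ≤ t) {n : ℕ} (hn : t < n + 1) :
    ∑' r, t ^ (r + n) / (r + n)! ≤ t ^ n / n ! * ((n + 1) / (n + 1 - t)) := by
  have hq0 : 0 ≤ t / (n + 1) := by positivity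
  have hq1 : t / (n + 1) < 1 := (div_lt_one (by positivity)).2 hn
  have hterm (r : ℕ) : t ^ (r + n) / (r + n)! ≤ t ^ n / n ! * (t / (n + 1)) ^ r := by
    rw [div_pow, div_mul_div_comm, ← pow_add, add_comm n r]
    gcongr
    exact_mod_cast add_comm n r ▸ (Nat.factorial_mul_pow_le_factorial : n ! * (n + 1) ^ r ≤ _)
  calc ∑' r, t ^ (r + n) / (r + n)!
      ≤ ∑' r, t ^ n / n ! * (t / (n + 1)) ^ r :=
        Summable.tsum_le_tsum hterm
          ((summable_nat_add_iff n).2 (Real.summable_pow_div_factorial t))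
          ((summable_geometric_of_lt_one hq0 hq1).mul_left _)
    _ = t ^ n / n ! * ((n + 1) / (n + 1 - t)) := by
        rw [tsum_mul_left, tsum_geometric_of_lt_one hq0 hq1]
        congr 1
        field_simp

lemma abs_sum_range_mul_tsum_sub_le {w h : ℕ → ℝ} (hw : ∀ i, 0 ≤ w i) (hws : Summable w)
    (h0 : ∀ i, 0 ≤ h i) (h1 : ∀ i, h i ≤ 1) (n : ℕ) :
    |(∑ i ∈ Finset.range n, h i * w i) * ∑' i, w i
        - (∑' i, h i * w i) * ∑ i ∈ Finset.range n, w i|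
      ≤ (∑ i ∈ Finset.range n, w i) * ∑' i, w (i + n) := by
  have hhw_le (i : ℕ) : h i * w i ≤ w i := mul_le_of_le_one_left (hw i) (h1 i)
  have hhws : Summable fun i ↦ h i * w i :=
    hws.of_nonneg_of_le (fun i ↦ mul_nonneg (h0 i) (hw i)) hhw_le
  rw [← hws.sum_add_tsum_nat_add n, ← hhws.sum_add_tsum_nat_add n]
  set A := ∑ i ∈ Finset.range n, h i * w i
  set B := ∑' i, h (i + n) * w (i + n)
  set T := ∑ i ∈ Finset.range n, w i
  set R := ∑' i, w (i + n)
  rw [show A * (T + R) - (A + B) * T = A * R - B * T by ring]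
  have hA : A ≤ T := Finset.sum_le_sum fun i _ ↦ hhw_le i
  have hB : B ≤ R := ((summable_nat_add_iff n).2 hhws).tsum_le_tsum (fun i ↦ hhw_le _)
    ((summable_nat_add_iff n).2 hws)
  have hA0 : 0 ≤ A := Finset.sum_nonneg fun i _ ↦ mul_nonneg (h0 i) (hw i)
  have hB0 : 0 ≤ B := tsum_nonneg fun i ↦ mul_nonneg (h0 _) (hw _)
  have hT0 : 0 ≤ T := Finset.sum_nonneg fun i _ ↦ hw i
  have hR0 : 0 ≤ R := tsum_nonneg fun i ↦ hw _
  exact abs_sub_le_of_nonneg_of_le (mul_nonneg hA0 hR0) (by gcongr) (mul_nonneg hB0 hT0)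
    (by rw [mul_comm T]; gcongr)

lemma nuT_eq_exp_neg_mul_tsum (t : ℝ) (E : Set ℕ) :
    nuT t E = Real.exp (-t) * ∑' i, E.indicator (fun _ ↦ (1 : ℝ)) i * (t ^ i / i !) := by
  rw [nuT, tsum_subtype E fun k ↦ Real.exp (-t) * t ^ k / k !, ← tsum_mul_left]
  congr 1 with i
  by_cases hi : i ∈ E <;> simp [hi, mul_div_assoc]

lemma steinInd_succ_eq (t : ℝ) (E : Set ℕ) (k : ℕ) :
    steinInd t E (k + 1) = k ! / t ^ (k + 1) * Real.exp (-t) *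
      ((∑ i ∈ Finset.range (k + 1), E.indicator (fun _ ↦ (1 : ℝ)) i * (t ^ i / i !))
          * (∑' i, t ^ i / i !)
        - (∑' i, E.indicator (fun _ ↦ (1 : ℝ)) i * (t ^ i / i !))
          * ∑ i ∈ Finset.range (k + 1), t ^ i / i !) := by
  set χ : ℕ → ℝ := E.indicator fun _ ↦ 1
  have hsum : ∑ i ∈ Finset.range (k + 1), (χ i - nuT t E) * t ^ i / i !
      = ∑ i ∈ Finset.range (k + 1), χ i * (t ^ i / i !)
        - nuT t E * ∑ i ∈ Finset.range (k + 1), t ^ i / i ! := by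
    rw [Finset.mul_sum, ← Finset.sum_sub_distrib]
    exact Finset.sum_congr rfl fun i _ ↦ by ring
  have hexp : Real.exp (-t) * Real.exp t = 1 := by
    rw [← Real.exp_add, neg_add_cancel, Real.exp_zero]
  rw [steinInd, hsum, (hasSum_pow_div_factorial t).tsum_eq, nuT_eq_exp_neg_mul_tsum]
  linear_combination
    -(k ! / t ^ (k + 1) : ℝ) * (∑ i ∈ Finset.range (k + 1), χ i * (t ^ i / i !)) * hexp

lemma abs_steinInd_succ_le {t : ℝ} (ht : 0 ≤ t) (E : Set ℕ) (k : ℕ) :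
    |steinInd t E (k + 1)| ≤ k ! / t ^ (k + 1) * Real.exp (-t) *
      ((∑ i ∈ Finset.range (k + 1), t ^ i / i !) *
        ∑' r, t ^ (r + (k + 1)) / (r + (k + 1))!) := by
  rw [steinInd_succ_eq, abs_mul, abs_of_nonneg (by positivity)]
  gcongr
  exact abs_sum_range_mul_tsum_sub_le (fun i ↦ by positivity) (Real.summable_pow_div_factorial t)
    (fun i ↦ Set.indicator_nonneg (fun _ _ ↦ zero_le_one) i)
    (fun i ↦ Set.indicator_apply_le' (fun _ ↦ le_rfl) (fun _ ↦ zero_le_one)) (k + 1)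

lemma abs_steinInd_le_one {t : ℝ} (ht : 0 < t) (E : Set ℕ) (k : ℕ) : |steinInd t E k| ≤ 1 := by
  cases k with
  | zero => simp [steinInd]
  | succ k =>
    calc |steinInd t E (k + 1)|
        ≤ k ! / t ^ (k + 1) * Real.exp (-t) *
          ((∑ i ∈ Finset.range (k + 1), t ^ i / i !) *
            ∑' r, t ^ (r + (k + 1)) / (r + (k + 1))!) :=
          abs_steinInd_succ_le ht.le E k
      _ ≤ k ! / t ^ (k + 1) * Real.exp (-t) *
          (((k + 1 : ℕ) : ℝ) * (t ^ (k + 1) / (k + 1)!) * Real.exp t) :=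
          mul_le_mul_of_nonneg_left (sum_range_mul_tsum_add_le ht.le (k + 1)) (by positivity)
      _ = 1 := by
          rw [Nat.factorial_succ, Real.exp_neg]
          push_cast
          field_simp

lemma abs_steinInd_le_of_lt {t : ℝ} (ht : 0 < t) (E : Set ℕ) {k : ℕ} (hk : t < k) :
    |steinInd t E k| ≤ (2 + t) / k := by
  cases k with
  | zero => exact absurd hk (by simpa using ht.le)
  | succ k =>
    push_cast at hk ⊢
    have hT : ∑ i ∈ Finset.range (k + 1), t ^ i / i ! ≤ Real.exp t :=
      (hasSum_pow_div_factorial t).tsum_eq ▸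
        (Real.summable_pow_div_factorial t).sum_le_tsum _ fun i _ ↦ by positivity
    have hR := tsum_pow_div_factorial_add_le_geometric ht.le (n := k + 1) (by push_cast; linarith)
    push_cast at hR
    have hgap : 0 < (k : ℝ) + 1 + 1 - t := by linarith
    calc |steinInd t E (k + 1)|
        ≤ k ! / t ^ (k + 1) * Real.exp (-t) *
          ((∑ i ∈ Finset.range (k + 1), t ^ i / i !) *
            ∑' r, t ^ (r + (k + 1)) / (r + (k + 1))!) :=
          abs_steinInd_succ_le ht.le E k
      _ ≤ k ! / t ^ (k + 1) * Real.exp (-t) *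
          (Real.exp t * (t ^ (k + 1) / (k + 1)! * ((k + 1 + 1) / (k + 1 + 1 - t)))) := by
          gcongr
      _ = (k + 1 + 1) / ((k + 1) * (k + 1 + 1 - t)) := by
          rw [Nat.factorial_succ, Real.exp_neg]
          push_cast
          field_simp [hgap.ne']
      _ ≤ (2 + t) / (k + 1) := by
          have hk1 : (0 : ℝ) < k + 1 := by positivity
          rw [div_le_div_iff₀ (mul_pos hk1 hgap) hk1]
          nlinarith [mul_pos (mul_pos ht (sub_pos.2 hk)) hk1]

lemma sum_Ioc_inv_le_log_sub_log {K m : ℕ} (hK : 0 < K) (hKm : K ≤ m) :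
    ∑ k ∈ Finset.Ioc K m, (k : ℝ)⁻¹ ≤ Real.log m - Real.log K := by
  induction m, hKm using Nat.le_induction with
  | base => simp
  | succ m hKm ih =>
    have hm : (0 : ℝ) < m := by exact_mod_cast hK.trans_le hKm
    have hstep : ((m + 1 : ℕ) : ℝ)⁻¹ ≤ Real.log (m + 1) - Real.log m := by
      have := Real.one_sub_inv_le_log_of_pos (x := (m + 1) / m) (by positivity)
      rw [Real.log_div (by positivity) hm.ne', inv_div] at this
      convert this using 1
      field_simp
      push_cast
      ring
    rw [Finset.sum_Ioc_succ_top hKm]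
    push_cast at hstep ⊢
    linarith

lemma sub_le_mul_log_div {t K c : ℝ} (ht : 0 < t) (htK : t ≤ K) (hKc : K ≤ c) :
    K - t ≤ c * Real.log (K / t) := by
  have hK : 0 < K := ht.trans_le htK
  have hlog : 1 - t / K ≤ Real.log (K / t) := by
    simpa [inv_div] using Real.one_sub_inv_le_log_of_pos (div_pos hK ht)
  have hfrac : 0 ≤ 1 - t / K := sub_nonneg.2 ((div_le_one hK).2 htK)
  calc K - t = K * (1 - t / K) := by field_simp
    _ ≤ c * (1 - t / K) := by gcongr
    _ ≤ c * Real.log (K / t) := by gcongr; linarith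

lemma sum_Icc_le_add_mul_log {a : ℕ → ℝ} {t c : ℝ} (ht : 0 < t) (hc : t + 1 ≤ c)
    (ha : ∀ k, a k ≤ 1) (hac : ∀ k : ℕ, t < k → a k ≤ c / k) {m : ℕ} (hm : t < m) :
    ∑ k ∈ Finset.Icc 1 m, a k ≤ t + c * Real.log (m / t) := by
  set K := ⌊t⌋₊ + 1
  have htK : t < K := by simpa [K] using Nat.lt_floor_add_one t
  have hKt : (K : ℝ) ≤ t + 1 := by simpa [K] using Nat.floor_le ht.le
  have hKm : K ≤ m := (Nat.floor_lt ht.le).2 hm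
  have hhead : ∑ k ∈ Finset.Ioc 0 K, a k ≤ K :=
    (Finset.sum_le_card_nsmul _ _ 1 fun k _ ↦ ha k).trans (by simp)
  have htail : ∑ k ∈ Finset.Ioc K m, a k ≤ c * (Real.log m - Real.log K) :=
    calc ∑ k ∈ Finset.Ioc K m, a k
        ≤ ∑ k ∈ Finset.Ioc K m, c * (k : ℝ)⁻¹ := Finset.sum_le_sum fun k hk ↦
          (hac k (htK.trans_le (by exact_mod_cast (Finset.mem_Ioc.1 hk).1.le))).trans_eq
            (div_eq_mul_inv _ _)
      _ = c * ∑ k ∈ Finset.Ioc K m, (k : ℝ)⁻¹ := (Finset.mul_sum _ _ _).symm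
      _ ≤ c * (Real.log m - Real.log K) := by
          gcongr
          · linarith
          · exact sum_Ioc_inv_le_log_sub_log (Nat.succ_pos _) hKm
  have hK := sub_le_mul_log_div ht htK.le (hKt.trans hc)
  rw [Real.log_div (by positivity) ht.ne'] at hK
  rw [show Finset.Icc 1 m = Finset.Ioc 0 m from Finset.Icc_add_one_left_eq_Ioc 0 m,
    ← Finset.sum_Ioc_consecutive _ (Nat.zero_le K) hKm, Real.log_div (ht.trans hm).ne' ht.ne']
  linarith

/-- **Lemma (summed bounds on the Stein solution).**
`Σ_{k=1}^m |f_{χ_E}(k)| ≤ m` if `m ≤ t`, and `≤ t + (2+t) log(m/t)` if `m > t`. -/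
theorem steinInd_sum_bounds (t : ℝ) (ht : 0 < t) (E : Set ℕ) (m : ℕ) :
    ((m : ℝ) ≤ t → ∑ k ∈ Finset.Icc 1 m, |steinInd t E k| ≤ (m : ℝ)) ∧
    (t < (m : ℝ) → ∑ k ∈ Finset.Icc 1 m, |steinInd t E k|
        ≤ t + (2 + t) * Real.log ((m : ℝ) / t)) := by
  refine ⟨fun _ ↦ ?_, sum_Icc_le_add_mul_log ht (by linarith) (abs_steinInd_le_one ht E)
    fun k hk ↦ abs_steinInd_le_of_lt ht E hk⟩
  calc ∑ k ∈ Finset.Icc 1 m, |steinInd t E k| ≤ ∑ k ∈ Finset.Icc 1 m, 1 :=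
        Finset.sum_le_sum fun k _ ↦ abs_steinInd_le_one ht E k
    _ = m := by simp
end

section
/- Let (X,d) be a metric space, T : X → X a map, μ a Borel probability measure, and 𝒜 a finite measurable partition with γ_m = diam(𝒜^m). Assume there are constants γ ∈ (0,1), 0 < ξ ≤ 1 and C > 0 with γ_m ≤ C·γ^{m^ξ} for all m, and constants ζ > 1/ξ and C_ε > 0 (independent of x and δ) with ψ(ε,δ,x) ≤ C_ε/|log δ|^ζ for all x ∈ X and all small δ > 0. Fix η ∈ (1/(ξζ), 1) and x ∈ X, suppose there is c > 0 with μ(B_{ε,n}(x)) ≤ e^{−cn} for all large n, and set N(n) = ⌈μ(B_{ε,n}(x))^{−η}⌉. Then sup_{0 ≤ k < n} n·ψ(ε, γ_{N(n)−k}, T^k x)/μ(B_{ε,n}(x)) → 0 as n → ∞; i.e., condition (t5e) holds with ϑ_n(ε) → 0. -/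
open MeasureTheory Filter Set Metric Topology ENNReal

/-- The `(ε,n)`-Bowen ball `B_{ε,n}(x)`. -/
def bowenBall {X : Type*} [PseudoMetricSpace X] (T : X → X) (ε : ℝ) (n : ℕ) (x : X) : Set X :=
  {y | ∀ k < n, dist (T^[k] x) (T^[k] y) < ε}

/-- `W_{A,m}(x)`, the number of visits of the orbit `Tx, …, T^m x` to `A`. -/
noncomputable def visits {X : Type*} (T : X → X) (A : Set X) (m : ℕ) (x : X) : ℕ :=
  ∑ j ∈ Finset.Icc 1 m, A.indicator (fun _ => 1) (T^[j] x)

/-- The first hitting time `τ_A(x) = min {k ≥ 1 : T^k x ∈ A}` (junk value `0` if no hit). -/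
noncomputable def hitTime {X : Type*} (T : X → X) (A : Set X) (x : X) : ℕ :=
  sInf {k | 1 ≤ k ∧ T^[k] x ∈ A}

/-- The set `{τ_A ≤ Δ}` of points hitting `A` at some time `1 ≤ k ≤ Δ`. -/
def hitBefore {X : Type*} (T : X → X) (A : Set X) (Δ : ℕ) : Set X :=
  {x | ∃ k, 1 ≤ k ∧ k ≤ Δ ∧ T^[k] x ∈ A}

/-- The period `τ(A) = min {k ≥ 1 : T^{-k}A ∩ A ≠ ∅}` (junk value `0` if no return). -/
noncomputable def period {X : Type*} (T : X → X) (A : Set X) : ℕ :=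
  sInf {k | 1 ≤ k ∧ (A ∩ T^[k] ⁻¹' A).Nonempty}

/-- The `n`-cylinder `A_n(x)` of the partition `𝒜`: the set of points whose
`𝒜`-itinerary of length `n` agrees with that of `x`. -/
def cylinder {X : Type*} (T : X → X) (𝒜 : Set (Set X)) (n : ℕ) (x : X) : Set X :=
  {y | ∀ j < n, ∀ A ∈ 𝒜, (T^[j] x ∈ A ↔ T^[j] y ∈ A)}

/-- The elements of the `n`-th join `𝒜^n = ⋁_{j=0}^{n-1} T^{-j}𝒜` (the `n`-cylinders). -/
def joinCyl {X : Type*} (T : X → X) (𝒜 : Set (Set X)) (n : ℕ) : Set (Set X) :=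
  {S | ∃ ω : Fin n → Set X, (∀ j, ω j ∈ 𝒜) ∧ S = ⋂ j : Fin n, T^[(j : ℕ)] ⁻¹' ω j}

/-- `diam (𝒜^n)`, the supremum of the diameters of the `n`-cylinders. -/
noncomputable def joinDiam {X : Type*} [PseudoMetricSpace X] (T : X → X) (𝒜 : Set (Set X))
    (n : ℕ) : ℝ :=
  ⨆ x : X, Metric.diam (cylinder T 𝒜 n x)

/-- `ψ(ε,δ,x)`: the proportion of the measure of the annulus
`B(x,ε+δ) ∖ B(x,ε-δ)` to that of the ball `B(x,ε)`. -/
noncomputable def psiReg {X : Type*} [PseudoMetricSpace X] [MeasurableSpace X]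
    (μ : Measure X) (ε δ : ℝ) (x : X) : ℝ :=
  ((μ (ball x (ε + δ))).toReal - (μ (ball x (ε - δ))).toReal) / (μ (ball x ε)).toReal

/-- `μ` is `φ`-mixing w.r.t. the partition `𝒜`. -/
def phiMixing {X : Type*} [MeasurableSpace X] (μ : Measure X) (T : X → X)
    (𝒜 : Set (Set X)) (φ : ℕ → ℝ) : Prop :=
  ∀ n k : ℕ, ∀ A B : Set X,
    MeasurableSet[MeasurableSpace.generateFrom (joinCyl T 𝒜 n)] A →
    MeasurableSet[MeasurableSpace.generateFrom (⋃ j, joinCyl T 𝒜 j)] B →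
    |(μ (A ∩ T^[n + k] ⁻¹' B)).toReal - (μ A).toReal * (μ B).toReal| ≤ φ k * (μ B).toReal

/-- `μ` is `α`-mixing w.r.t. the partition `𝒜`. -/
def alphaMixing {X : Type*} [MeasurableSpace X] (μ : Measure X) (T : X → X)
    (𝒜 : Set (Set X)) (α : ℕ → ℝ) : Prop :=
  ∀ n k : ℕ, ∀ A B : Set X,
    MeasurableSet[MeasurableSpace.generateFrom (joinCyl T 𝒜 n)] A →
    MeasurableSet[MeasurableSpace.generateFrom (⋃ j, joinCyl T 𝒜 j)] B →
    |(μ (A ∩ T^[n + k] ⁻¹' B)).toReal - (μ A).toReal * (μ B).toReal| ≤ α k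

/-- `ν_t({k}) = e^{-t} t^k / k!`, the Poisson weight. -/
noncomputable def poissonPM (t : ℝ) (k : ℕ) : ℝ := Real.exp (-t) * t ^ k / (Nat.factorial k)

/-- `ν_t(E)`, the Poisson measure of a set `E ⊆ ℕ₀`. -/
noncomputable def poissonMeas (t : ℝ) (E : Set ℕ) : ℝ := ∑' k : E, poissonPM t (k : ℕ)

private lemma exp_tendsto_aux {a : ℝ} (ha : 0 < a) :
    Tendsto (fun n : ℕ => Real.exp (a * n)) atTop atTop :=
  Real.tendsto_exp_atTop.comp (tendsto_natCast_atTop_atTop.const_mul_atTop ha)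

private lemma mul_exp_tendsto_aux {a : ℝ} (ha : 0 < a) :
    Tendsto (fun n : ℕ => (n : ℝ) * Real.exp (-(a * n))) atTop (𝓝 0) := by
  have h0 : Tendsto (fun x : ℝ => x ^ 1 * Real.exp (-x)) atTop (𝓝 0) :=
    Real.tendsto_pow_mul_exp_neg_atTop_nhds_zero 1
  have h1 : Tendsto (fun n : ℕ => a * (n : ℝ)) atTop atTop :=
    tendsto_natCast_atTop_atTop.const_mul_atTop ha
  have h2 := (h0.comp h1).const_mul (a⁻¹)
  rw [mul_zero] at h2
  have heq : (fun n : ℕ => (n : ℝ) * Real.exp (-(a * n)))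
      = fun n : ℕ => a⁻¹ * ((fun x : ℝ => x ^ 1 * Real.exp (-x)) (a * n)) := by
    funext n
    field_simp
  rw [heq]
  exact h2

set_option maxHeartbeats 1000000 in
/-- **Lemma (verification of condition (t5e)).** Under stretched-exponential decay of
cylinder diameters, logarithmic regularity of annuli and exponential smallness of Bowen
balls, the choice `N(n) = ⌈μ(B_{ε,n}(x))^{-η}⌉` satisfies
`sup_{0≤k<n} n·ψ(ε, γ_{N(n)-k}, T^k x)/μ(B_{ε,n}(x)) → 0`. -/
theorem t5e_condition_holds
    {X : Type*} [MetricSpace X] [MeasurableSpace X]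
    (T : X → X) (μ : Measure X) [IsProbabilityMeasure μ]
    (𝒜 : Set (Set X)) (hfin : 𝒜.Finite)
    (hpart : ∀ x : X, ∃! A, A ∈ 𝒜 ∧ x ∈ A)
    (γ ξ : ℝ) (hγ0 : 0 < γ) (hγ1 : γ < 1) (hξ0 : 0 < ξ) (hξ1 : ξ ≤ 1)
    (C : ℝ) (hC : 0 < C)
    (hdiam : ∀ m : ℕ, joinDiam T 𝒜 m ≤ C * γ ^ ((m : ℝ) ^ ξ))
    (ζ : ℝ) (hζ : 1 / ξ < ζ)
    (ε : ℝ) (hε : 0 < ε) (Cε : ℝ) (hCε : 0 < Cε) (δ₀ : ℝ) (hδ₀ : 0 < δ₀)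
    (hψ : ∀ y : X, ∀ δ : ℝ, 0 < δ → δ < δ₀ → psiReg μ ε δ y ≤ Cε / |Real.log δ| ^ ζ)
    (η : ℝ) (hη1 : 1 / (ξ * ζ) < η) (hη2 : η < 1)
    (x : X) (c : ℝ) (hc : 0 < c)
    (hsmall : ∃ n₀ : ℕ, ∀ n : ℕ, n₀ ≤ n →
      (μ (bowenBall T ε n x)).toReal ≤ Real.exp (-c * n))
    (N : ℕ → ℕ)
    (hNdef : ∀ n : ℕ, N n = ⌈(μ (bowenBall T ε n x)).toReal ^ (-η)⌉₊) :
    ∀ θ : ℝ, 0 < θ → ∀ᶠ n : ℕ in atTop, ∀ k < n,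
      (n : ℝ) * psiReg μ ε (joinDiam T 𝒜 (N n - k)) (T^[k] x)
          / (μ (bowenBall T ε n x)).toReal < θ := by
  intro θ hθ
  obtain ⟨n₀, hn₀⟩ := hsmall
  have hζ0 : 0 < ζ := lt_trans (by positivity) hζ
  have hη0 : 0 < η := lt_trans (by positivity) hη1
  have hξζ : 0 < ξ * ζ := mul_pos hξ0 hζ0
  have hs0 : 0 < η * ξ * ζ - 1 := by
    have h1 : 1 < η * (ξ * ζ) := (div_lt_iff₀ hξζ).mp hη1
    nlinarith
  set s : ℝ := η * ξ * ζ - 1 with hs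
  set L : ℝ := -Real.log γ with hLdef
  have hL0 : 0 < L := by
    have := Real.log_neg hγ0 hγ1
    simp only [hLdef]; linarith
  -- eventual conditions
  have E1 : ∀ᶠ n : ℕ in atTop, n₀ ≤ n := eventually_ge_atTop n₀
  have E2 : ∀ᶠ n : ℕ in atTop, (n : ℝ) * Real.exp (-(c * η * n)) ≤ 1 / 2 :=
    (mul_exp_tendsto_aux (mul_pos hc hη0)).eventually_le_const (by norm_num)
  have hLexp : Tendsto (fun n : ℕ => L / 4 * Real.exp (c * (η * ξ) * n)) atTop atTop :=
    (exp_tendsto_aux (by positivity)).const_mul_atTop (by positivity)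
  have E3 : ∀ᶠ n : ℕ in atTop, Real.log C ≤ L / 4 * Real.exp (c * (η * ξ) * n) :=
    hLexp.eventually_ge_atTop _
  have E4 : ∀ᶠ n : ℕ in atTop, -Real.log δ₀ < L / 4 * Real.exp (c * (η * ξ) * n) :=
    hLexp.eventually_gt_atTop _
  have E5 : ∀ᶠ n : ℕ in atTop,
      Cε * ((L / 4) ^ ζ)⁻¹ * ((n : ℝ) * Real.exp (-(c * s * n))) < θ := by
    have h := (mul_exp_tendsto_aux (mul_pos hc hs0)).const_mul (Cε * ((L / 4) ^ ζ)⁻¹)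
    rw [mul_zero] at h
    exact h.eventually_lt_const hθ
  filter_upwards [E1, E2, E3, E4, E5] with n h1 h2 h3 h4 h5 k hk
  set p : ℝ := (μ (bowenBall T ε n x)).toReal with hpdef
  have hp0 : (0 : ℝ) ≤ p := ENNReal.toReal_nonneg
  rcases hp0.eq_or_lt with hpz | hpp
  · rw [← hpz]
    simpa using hθ
  have hpn : p ≤ Real.exp (-c * n) := hn₀ n h1
  have key : ∀ a : ℝ, 0 < a → Real.exp (c * a * n) ≤ p ^ (-a) := by
    intro a ha
    have h1' : p ^ a ≤ Real.exp (-(c * a * n)) := by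
      calc p ^ a ≤ Real.exp (-c * n) ^ a := Real.rpow_le_rpow hpp.le hpn ha.le
        _ = Real.exp (-c * n * a) := (Real.exp_mul _ _).symm
        _ = Real.exp (-(c * a * n)) := by ring_nf
    rw [Real.rpow_neg hpp.le]
    calc Real.exp (c * a * n) = (Real.exp (-(c * a * n)))⁻¹ := by
          rw [Real.exp_neg, inv_inv]
      _ ≤ (p ^ a)⁻¹ := inv_anti₀ (Real.rpow_pos_of_pos hpp a) h1'
  have hq : Real.exp (c * η * n) ≤ p ^ (-η) := key η hη0
  have hq2 : Real.exp (c * (η * ξ) * n) ≤ p ^ (-(η * ξ)) := key (η * ξ) (by positivity)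
  have hpe : (0 : ℝ) < p ^ (-η) := Real.rpow_pos_of_pos hpp _
  have hpe2 : (0 : ℝ) < p ^ (-(η * ξ)) := Real.rpow_pos_of_pos hpp _
  have hN : p ^ (-η) ≤ (N n : ℝ) := by rw [hNdef n]; exact Nat.le_ceil _
  have h2n : 2 * (n : ℝ) ≤ Real.exp (c * η * n) := by
    have h2' := mul_le_mul_of_nonneg_right h2 (Real.exp_pos (c * η * (n : ℝ))).le
    calc 2 * (n : ℝ)
        = 2 * (((n : ℝ) * Real.exp (-(c * η * n))) * Real.exp (c * η * n)) := by
          rw [mul_assoc, ← Real.exp_add]; simp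
      _ ≤ 2 * ((1 / 2) * Real.exp (c * η * n)) := by linarith
      _ = Real.exp (c * η * n) := by ring
  have hkn : k ≤ N n := by
    have hkr : (k : ℝ) < n := by exact_mod_cast hk
    have : (k : ℝ) ≤ (N n : ℝ) := by linarith [Nat.cast_nonneg (α := ℝ) n]
    exact_mod_cast this
  have hM : (1 / 2) * p ^ (-η) ≤ ((N n - k : ℕ) : ℝ) := by
    rw [Nat.cast_sub hkn]
    have hkr : (k : ℝ) < n := by exact_mod_cast hk
    linarith
  have hMpos : (0 : ℝ) < ((N n - k : ℕ) : ℝ) := by linarith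
  set δ : ℝ := joinDiam T 𝒜 (N n - k) with hδdef
  have hδnn : (0 : ℝ) ≤ δ := Real.iSup_nonneg fun y => Metric.diam_nonneg
  rcases hδnn.eq_or_lt with hδz | hδpos
  · rw [← hδz]
    simpa [psiReg] using hθ
  -- δ > 0
  have hMξ : (1 / 2) * p ^ (-(η * ξ)) ≤ ((N n - k : ℕ) : ℝ) ^ ξ := by
    have ha : ((1 / 2) * p ^ (-η)) ^ ξ ≤ ((N n - k : ℕ) : ℝ) ^ ξ :=
      Real.rpow_le_rpow (by positivity) hM hξ0.le
    have hb : ((1 / 2) * p ^ (-η)) ^ ξ = (1 / 2 : ℝ) ^ ξ * (p ^ (-η)) ^ ξ :=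
      Real.mul_rpow (by norm_num) hpe.le
    have hcx : (p ^ (-η)) ^ ξ = p ^ (-(η * ξ)) := by
      rw [← Real.rpow_mul hpp.le]; ring_nf
    have hd : (1 / 2 : ℝ) ≤ (1 / 2 : ℝ) ^ ξ := by
      calc (1 / 2 : ℝ) = (1 / 2 : ℝ) ^ (1 : ℝ) := (Real.rpow_one _).symm
        _ ≤ (1 / 2 : ℝ) ^ ξ :=
          Real.rpow_le_rpow_of_exponent_ge (by norm_num) (by norm_num) hξ1
    calc (1 / 2) * p ^ (-(η * ξ))
        ≤ (1 / 2 : ℝ) ^ ξ * p ^ (-(η * ξ)) := mul_le_mul_of_nonneg_right hd hpe2.le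
      _ = (1 / 2 : ℝ) ^ ξ * (p ^ (-η)) ^ ξ := by rw [hcx]
      _ = ((1 / 2) * p ^ (-η)) ^ ξ := hb.symm
      _ ≤ ((N n - k : ℕ) : ℝ) ^ ξ := ha
  have hγpow : (0 : ℝ) < γ ^ ((((N n - k : ℕ) : ℝ)) ^ ξ) := Real.rpow_pos_of_pos hγ0 _
  have hlog1 : Real.log δ ≤ Real.log C + (((N n - k : ℕ) : ℝ) ^ ξ) * Real.log γ := by
    calc Real.log δ ≤ Real.log (C * γ ^ ((((N n - k : ℕ) : ℝ)) ^ ξ)) :=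
          Real.log_le_log hδpos (hdiam _)
      _ = Real.log C + Real.log (γ ^ ((((N n - k : ℕ) : ℝ)) ^ ξ)) :=
          Real.log_mul hC.ne' hγpow.ne'
      _ = Real.log C + (((N n - k : ℕ) : ℝ) ^ ξ) * Real.log γ := by
          rw [Real.log_rpow hγ0]
  have hBn : L / 4 * Real.exp (c * (η * ξ) * n) ≤ L / 4 * p ^ (-(η * ξ)) :=
    mul_le_mul_of_nonneg_left hq2 (by positivity)
  have hlogC : Real.log C ≤ L / 4 * p ^ (-(η * ξ)) := le_trans h3 hBn
  have hlogγ : Real.log γ = -L := by rw [hLdef]; ring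
  have hlogδ : Real.log δ ≤ -(L / 4 * p ^ (-(η * ξ))) := by
    rw [hlogγ] at hlog1
    have hprod : L * ((1 / 2) * p ^ (-(η * ξ))) ≤ L * ((N n - k : ℕ) : ℝ) ^ ξ :=
      mul_le_mul_of_nonneg_left hMξ hL0.le
    nlinarith [hlog1, hlogC, hprod]
  have hδδ₀ : δ < δ₀ := by
    have hlt : Real.log δ < Real.log δ₀ := by
      have : -Real.log δ₀ < L / 4 * p ^ (-(η * ξ)) := lt_of_lt_of_le h4 hBn
      linarith
    rwa [Real.log_lt_log_iff hδpos hδ₀] at hlt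
  have hψb := hψ (T^[k] x) δ hδpos hδδ₀
  have habs : L / 4 * p ^ (-(η * ξ)) ≤ |Real.log δ| := by
    have := neg_le_abs (Real.log δ)
    linarith
  have hpowpos : (0 : ℝ) < (L / 4 * p ^ (-(η * ξ))) ^ ζ :=
    Real.rpow_pos_of_pos (by positivity) _
  have hmono : (L / 4 * p ^ (-(η * ξ))) ^ ζ ≤ |Real.log δ| ^ ζ :=
    Real.rpow_le_rpow (by positivity) habs hζ0.le
  have hψb2 : psiReg μ ε δ (T^[k] x) ≤ Cε / (L / 4 * p ^ (-(η * ξ))) ^ ζ :=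
    le_trans hψb (div_le_div_of_nonneg_left hCε.le hpowpos hmono)
  have hpz3 : (0 : ℝ) < p ^ (η * ξ * ζ) := Real.rpow_pos_of_pos hpp _
  have hsimp : Cε / (L / 4 * p ^ (-(η * ξ))) ^ ζ = Cε * ((L / 4) ^ ζ)⁻¹ * p ^ (η * ξ * ζ) := by
    have e1 : (p ^ (-(η * ξ))) ^ ζ = (p ^ (η * ξ * ζ))⁻¹ := by
      rw [← Real.rpow_mul hpp.le, show -(η * ξ) * ζ = -(η * ξ * ζ) by ring,
        Real.rpow_neg hpp.le]
    rw [Real.mul_rpow (by positivity) hpe2.le, e1]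
    have hLζ : (0 : ℝ) < (L / 4 : ℝ) ^ ζ := Real.rpow_pos_of_pos (by positivity) _
    field_simp
  have hψb3 : psiReg μ ε δ (T^[k] x) ≤ Cε * ((L / 4) ^ ζ)⁻¹ * p ^ (η * ξ * ζ) := by
    rw [← hsimp]; exact hψb2
  have step1 : (n : ℝ) * psiReg μ ε δ (T^[k] x) / p
      ≤ (n : ℝ) * (Cε * ((L / 4) ^ ζ)⁻¹ * p ^ (η * ξ * ζ)) / p := by
    apply div_le_div_of_nonneg_right ?_ hpp.le
    exact mul_le_mul_of_nonneg_left hψb3 (Nat.cast_nonneg n)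
  have hps : p ^ s = p ^ (η * ξ * ζ) / p := by
    rw [hs, Real.rpow_sub hpp, Real.rpow_one]
  have step2 : (n : ℝ) * (Cε * ((L / 4) ^ ζ)⁻¹ * p ^ (η * ξ * ζ)) / p
      = Cε * ((L / 4) ^ ζ)⁻¹ * ((n : ℝ) * p ^ s) := by
    rw [hps]; field_simp
  have step3 : p ^ s ≤ Real.exp (-(c * s * n)) := by
    calc p ^ s ≤ Real.exp (-c * n) ^ s := Real.rpow_le_rpow hpp.le hpn hs0.le
      _ = Real.exp (-c * n * s) := (Real.exp_mul _ _).symm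
      _ = Real.exp (-(c * s * n)) := by ring_nf
  have step4 : Cε * ((L / 4) ^ ζ)⁻¹ * ((n : ℝ) * p ^ s)
      ≤ Cε * ((L / 4) ^ ζ)⁻¹ * ((n : ℝ) * Real.exp (-(c * s * n))) := by
    have hK : (0 : ℝ) ≤ Cε * ((L / 4) ^ ζ)⁻¹ := by
      have : (0 : ℝ) < (L / 4 : ℝ) ^ ζ := Real.rpow_pos_of_pos (by positivity) _
      positivity
    exact mul_le_mul_of_nonneg_left
      (mul_le_mul_of_nonneg_left step3 (Nat.cast_nonneg n)) hK
  calc (n : ℝ) * psiReg μ ε δ (T^[k] x) / p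
      ≤ (n : ℝ) * (Cε * ((L / 4) ^ ζ)⁻¹ * p ^ (η * ξ * ζ)) / p := step1
    _ = Cε * ((L / 4) ^ ζ)⁻¹ * ((n : ℝ) * p ^ s) := step2
    _ ≤ Cε * ((L / 4) ^ ζ)⁻¹ * ((n : ℝ) * Real.exp (-(c * s * n))) := step4
    _ < θ := h5
end
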